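/- Let U ⊆ ℝ² be open and let ξ, φ : ℝ² → ℝ² be twice continuously differentiable on U. Then at every point x ∈ U the curl of the SALT operator B_ξφ := L_ξφ + T_ξφ satisfies curl(B_ξφ)(x) = (L_ξ(curl φ))(x) + (curl φ)(x)·(div ξ)(x); explicitly, ∂₁(B_ξφ)²(x) − ∂₂(B_ξφ)¹(x) = Σ_{j=1}^{2} ξ^j(x)·∂_j(∂₁φ² − ∂₂φ¹)(x) + (∂₁φ²(x) − ∂₂φ¹(x))·(∂₁ξ¹(x) + ∂₂ξ²(x)). -/

import Mathlib

noncomputable section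

/-- Partial derivative in the first coordinate of a scalar function on `ℝ²`. -/
def pd1 (f : ℝ × ℝ → ℝ) (x : ℝ × ℝ) : ℝ := fderiv ℝ f x (1, 0)

/-- Partial derivative in the second coordinate of a scalar function on `ℝ²`. -/
def pd2 (f : ℝ × ℝ → ℝ) (x : ℝ × ℝ) : ℝ := fderiv ℝ f x (0, 1)

/-- The transport operator `(L_ξ φ)^l = ∑_j ξ^j ∂_j φ^l` on vector fields over `ℝ²`. -/
def Ltrans (ξ φ : ℝ × ℝ → ℝ × ℝ) (x : ℝ × ℝ) : ℝ × ℝ :=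
  ((ξ x).1 * pd1 (fun y => (φ y).1) x + (ξ x).2 * pd2 (fun y => (φ y).1) x,
   (ξ x).1 * pd1 (fun y => (φ y).2) x + (ξ x).2 * pd2 (fun y => (φ y).2) x)

/-- The transport operator `L_ξ w = ∑_j ξ^j ∂_j w` on scalar functions over `ℝ²`. -/
def LtransScalar (ξ : ℝ × ℝ → ℝ × ℝ) (w : ℝ × ℝ → ℝ) (x : ℝ × ℝ) : ℝ :=
  (ξ x).1 * pd1 w x + (ξ x).2 * pd2 w x

/-- The operator `(T_ξ φ)^l = ∑_j φ^j ∂_l ξ^j` on vector fields over `ℝ²`. -/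
def Tsalt (ξ φ : ℝ × ℝ → ℝ × ℝ) (x : ℝ × ℝ) : ℝ × ℝ :=
  ((φ x).1 * pd1 (fun y => (ξ y).1) x + (φ x).2 * pd1 (fun y => (ξ y).2) x,
   (φ x).1 * pd2 (fun y => (ξ y).1) x + (φ x).2 * pd2 (fun y => (ξ y).2) x)

/-- The SALT operator `B_ξ φ = L_ξ φ + T_ξ φ`. -/
def SALT (ξ φ : ℝ × ℝ → ℝ × ℝ) (x : ℝ × ℝ) : ℝ × ℝ := Ltrans ξ φ x + Tsalt ξ φ x

/-- `curl f = ∂₁ f² - ∂₂ f¹` on `ℝ²`. -/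
def curl2 (f : ℝ × ℝ → ℝ × ℝ) (x : ℝ × ℝ) : ℝ :=
  pd1 (fun y => (f y).2) x - pd2 (fun y => (f y).1) x

/-- `div f = ∂₁ f¹ + ∂₂ f²` on `ℝ²`. -/
def div2 (f : ℝ × ℝ → ℝ × ℝ) (x : ℝ × ℝ) : ℝ :=
  pd1 (fun y => (f y).1) x + pd2 (fun y => (f y).2) x

/-!
The SALT operator splits as `B_ξ φ = ∇(ξ · φ) + (curl φ) ξ^⊥` with `ξ^⊥ = (-ξ², ξ¹)`, the planar
form of Cartan's formula for the Lie derivative of the 1-form `φ`. The curl of a gradient vanishes by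
symmetry of second derivatives, and `curl (w ξ^⊥) = div (w ξ) = L_ξ w + w div ξ`. The splitting
holds on all of `U`, so it may be differentiated at `x`.
-/

open Filter Topology

theorem ContDiffAt.differentiableAt_fderiv_apply {E F : Type*} [NormedAddCommGroup E]
    [NormedSpace ℝ E] [NormedAddCommGroup F] [NormedSpace ℝ F] {f : E → F} {x : E}
    (hf : ContDiffAt ℝ 2 f x) (v : E) : DifferentiableAt ℝ (fun y => fderiv ℝ f y v) x :=
  ((hf.fderiv_right (by norm_num)).differentiableAt one_ne_zero).clm_apply
    (differentiableAt_const v)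

section PartialDerivatives

variable {f g : ℝ × ℝ → ℝ} {x : ℝ × ℝ}

theorem pd1_add (hf : DifferentiableAt ℝ f x) (hg : DifferentiableAt ℝ g x) :
    pd1 (fun y => f y + g y) x = pd1 f x + pd1 g x := by
  simp [pd1, fderiv_fun_add hf hg]

theorem pd2_add (hf : DifferentiableAt ℝ f x) (hg : DifferentiableAt ℝ g x) :
    pd2 (fun y => f y + g y) x = pd2 f x + pd2 g x := by
  simp [pd2, fderiv_fun_add hf hg]

theorem pd1_mul (hf : DifferentiableAt ℝ f x) (hg : DifferentiableAt ℝ g x) :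
    pd1 (fun y => f y * g y) x = f x * pd1 g x + g x * pd1 f x := by
  simp [pd1, fderiv_fun_mul hf hg]

theorem pd2_mul (hf : DifferentiableAt ℝ f x) (hg : DifferentiableAt ℝ g x) :
    pd2 (fun y => f y * g y) x = f x * pd2 g x + g x * pd2 f x := by
  simp [pd2, fderiv_fun_mul hf hg]

theorem pd2_neg : pd2 (fun y => -f y) x = -pd2 f x := by
  simp [pd2]

theorem pd1_pd2_comm (hf : ContDiffAt ℝ 2 f x) : pd1 (pd2 f) x = pd2 (pd1 f) x := by
  have hd := (hf.fderiv_right (m := 1) (by norm_num)).differentiableAt one_ne_zero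
  show fderiv ℝ (fun y => fderiv ℝ f y (0, 1)) x (1, 0)
    = fderiv ℝ (fun y => fderiv ℝ f y (1, 0)) x (0, 1)
  rw [fderiv_clm_apply hd (differentiableAt_const _), fderiv_clm_apply hd (differentiableAt_const _)]
  simpa using hf.isSymmSndFDerivAt (by simp) (1, 0) (0, 1)

end PartialDerivatives

def grad2 (w : ℝ × ℝ → ℝ) (x : ℝ × ℝ) : ℝ × ℝ := (pd1 w x, pd2 w x)

theorem differentiableAt_grad2 {w : ℝ × ℝ → ℝ} {x : ℝ × ℝ} (hw : ContDiffAt ℝ 2 w x) :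
    DifferentiableAt ℝ (grad2 w) x :=
  (hw.differentiableAt_fderiv_apply _).prodMk (hw.differentiableAt_fderiv_apply _)

def perp (v : ℝ × ℝ) : ℝ × ℝ := (-v.2, v.1)

section Curl

variable {F G : ℝ × ℝ → ℝ × ℝ} {x : ℝ × ℝ}

theorem differentiableAt_curl2 (hF : ContDiffAt ℝ 2 F x) : DifferentiableAt ℝ (curl2 F) x :=
  (hF.snd.differentiableAt_fderiv_apply _).sub (hF.fst.differentiableAt_fderiv_apply _)

theorem curl2_congr (h : F =ᶠ[𝓝 x] G) : curl2 F x = curl2 G x := by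
  have h₁ : (fun y => (F y).1) =ᶠ[𝓝 x] fun y => (G y).1 := h.fun_comp Prod.fst
  have h₂ : (fun y => (F y).2) =ᶠ[𝓝 x] fun y => (G y).2 := h.fun_comp Prod.snd
  simp only [curl2, pd1, pd2, h₁.fderiv_eq, h₂.fderiv_eq]

theorem curl2_add (hF : DifferentiableAt ℝ F x) (hG : DifferentiableAt ℝ G x) :
    curl2 (fun y => F y + G y) x = curl2 F x + curl2 G x := by
  simp only [curl2, Prod.fst_add, Prod.snd_add]
  rw [pd1_add hF.snd hG.snd, pd2_add hF.fst hG.fst]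
  ring

theorem curl2_grad2 {w : ℝ × ℝ → ℝ} (hw : ContDiffAt ℝ 2 w x) : curl2 (grad2 w) x = 0 := by
  simp only [curl2, grad2]
  rw [pd1_pd2_comm hw, sub_self]

theorem curl2_smul_perp {w : ℝ × ℝ → ℝ} {ξ : ℝ × ℝ → ℝ × ℝ} (hw : DifferentiableAt ℝ w x)
    (hξ : DifferentiableAt ℝ ξ x) :
    curl2 (fun y => w y • perp (ξ y)) x = LtransScalar ξ w x + w x * div2 ξ x := by
  simp only [curl2, perp, Prod.smul_mk, smul_eq_mul, mul_neg]
  rw [pd1_mul hw hξ.fst, pd2_neg, pd2_mul hw hξ.snd]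
  simp only [LtransScalar, div2]
  ring

end Curl

theorem SALT_eq_grad2_add_curl2_smul_perp {ξ φ : ℝ × ℝ → ℝ × ℝ} {x : ℝ × ℝ}
    (hξ : DifferentiableAt ℝ ξ x) (hφ : DifferentiableAt ℝ φ x) :
    SALT ξ φ x =
      grad2 (fun y => (ξ y).1 * (φ y).1 + (ξ y).2 * (φ y).2) x + curl2 φ x • perp (ξ x) := by
  have h₁ : DifferentiableAt ℝ (fun y => (ξ y).1 * (φ y).1) x := hξ.fst.mul hφ.fst
  have h₂ : DifferentiableAt ℝ (fun y => (ξ y).2 * (φ y).2) x := hξ.snd.mul hφ.snd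
  simp only [SALT, Ltrans, Tsalt, grad2, curl2, perp]
  rw [pd1_add h₁ h₂, pd2_add h₁ h₂,
    pd1_mul hξ.fst hφ.fst, pd1_mul hξ.snd hφ.snd, pd2_mul hξ.fst hφ.fst, pd2_mul hξ.snd hφ.snd]
  ext <;> simp only [Prod.mk_add_mk, Prod.smul_mk, smul_eq_mul, mul_neg] <;> ring

/-- For `ξ, φ` twice continuously differentiable on an open set `U ⊆ ℝ²`, the curl of the
SALT operator satisfies `curl (B_ξ φ) = L_ξ (curl φ) + (curl φ) · (div ξ)` on `U`. -/
theorem curl_SALT (U : Set (ℝ × ℝ)) (hU : IsOpen U) (ξ φ : ℝ × ℝ → ℝ × ℝ)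
    (hξ : ContDiffOn ℝ 2 ξ U) (hφ : ContDiffOn ℝ 2 φ U) (x : ℝ × ℝ) (hx : x ∈ U) :
    curl2 (fun y => SALT ξ φ y) x =
      LtransScalar ξ (fun y => curl2 φ y) x + curl2 φ x * div2 ξ x := by
  have hξx : ContDiffAt ℝ 2 ξ x := hξ.contDiffAt (hU.mem_nhds hx)
  have hφx : ContDiffAt ℝ 2 φ x := hφ.contDiffAt (hU.mem_nhds hx)
  have hξd : DifferentiableAt ℝ ξ x := hξx.differentiableAt two_ne_zero
  set g := fun y => (ξ y).1 * (φ y).1 + (ξ y).2 * (φ y).2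
  have hg : ContDiffAt ℝ 2 g x := (hξx.fst.mul hφx.fst).add (hξx.snd.mul hφx.snd)
  have hcurl : DifferentiableAt ℝ (curl2 φ) x := differentiableAt_curl2 hφx
  have hdecomp : (fun y => SALT ξ φ y) =ᶠ[𝓝 x] fun y => grad2 g y + curl2 φ y • perp (ξ y) := by
    filter_upwards [hU.mem_nhds hx] with y hy
    exact SALT_eq_grad2_add_curl2_smul_perp
      ((hξ.contDiffAt (hU.mem_nhds hy)).differentiableAt two_ne_zero)
      ((hφ.contDiffAt (hU.mem_nhds hy)).differentiableAt two_ne_zero)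
  have hrot : DifferentiableAt ℝ (fun y => curl2 φ y • perp (ξ y)) x :=
    hcurl.smul (hξd.snd.neg.prodMk hξd.fst)
  rw [curl2_congr hdecomp, curl2_add (differentiableAt_grad2 hg) hrot, curl2_grad2 hg,
    curl2_smul_perp hcurl hξd, zero_add]

end
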